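/- arXiv:2403.04159 — 2 statements merged into one kernel-verified Lean document; each statement's English description precedes it below -/
import Mathlib

section
/- Let φ:ℕ→ℝ⁺ be any positive function. If Σ_{n=1}^∞ 2^{−φ(n)} = ∞, then the set F(φ)={x∈(0,1]: d_n(x)≥φ(n) for infinitely many n} has full Lebesgue measure in (0,1]. -/
/-! Under Lebesgue measure on `(0,1]`, the first digit equals `k + 1` exactly on
`(2^{-(k+1)}, 2^{-k}]`, where `p2dT` is the affine bijection `x ↦ 2^{k+1} x - 1` onto `(0,1]`.
Hence `{d₁ ≥ m + 1, T x ∈ S}` has measure `2^{-m} |S|`, and by induction on the number of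
constraints the digits are independent with `P(dₙ ≥ m) = 2^{-(m-1)}`. Since
`2^{-(⌈φ n⌉ - 1)} ≥ 2^{-φ n}`, the events `dₙ ≥ φ n` have divergent measure sum, and the second
Borel–Cantelli lemma finishes the proof. -/

open MeasureTheory Filter Set Real

/-- First digit of the power-2-decaying Gauss-like expansion:
`⌈y⌉` in the paper denotes the smallest integer strictly larger than `y`. -/
noncomputable def p2dD1 (x : ℝ) : ℕ := (⌊-Real.logb 2 x⌋ + 1).toNat

/-- The Gauss-like map `T x = 2^n x - 1` on `(1/2^n, 1/2^(n-1)]`. -/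
noncomputable def p2dT (x : ℝ) : ℝ := 2 ^ p2dD1 x * x - 1

/-- `n`-th digit (`n ≥ 1`) of the P2DGL expansion. -/
noncomputable def p2dDigit (n : ℕ) (x : ℝ) : ℕ := p2dD1 (p2dT^[n-1] x)

/-- Maximal digit among the first `n` digits. -/
noncomputable def p2dL (n : ℕ) (x : ℝ) : ℕ :=
  Finset.sup (Finset.Icc 1 n) (fun i => p2dDigit i x)

open scoped ENNReal

theorem le_p2dD1_iff {x : ℝ} (hx : x ∈ Ioc (0:ℝ) 1) (m : ℕ) :
    m + 1 ≤ p2dD1 x ↔ x ≤ ((2:ℝ) ^ m)⁻¹ := by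
  have hlog : 0 ≤ -logb 2 x := neg_nonneg.2 (logb_nonpos one_lt_two hx.1.le hx.2)
  have hfloor : (0:ℤ) ≤ ⌊-logb 2 x⌋ := Int.floor_nonneg.2 hlog
  rw [p2dD1, Int.le_toNat (by omega), Nat.cast_add, Nat.cast_one, add_le_add_iff_right,
    Int.le_floor, Int.cast_natCast, le_neg, logb_le_iff_le_rpow one_lt_two hx.1,
    rpow_neg zero_le_two, rpow_natCast]

theorem p2dD1_eq_succ_iff {x : ℝ} (hx : x ∈ Ioc (0:ℝ) 1) (k : ℕ) :
    p2dD1 x = k + 1 ↔ x ∈ Ioc ((2:ℝ) ^ (k + 1))⁻¹ ((2:ℝ) ^ k)⁻¹ := by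
  rw [mem_Ioc, ← le_p2dD1_iff hx, ← not_le, ← le_p2dD1_iff hx]
  omega

theorem one_le_p2dD1 {x : ℝ} (hx : x ∈ Ioc (0:ℝ) 1) : 1 ≤ p2dD1 x :=
  (le_p2dD1_iff hx 0).2 (by simpa using hx.2)

theorem Ioc_inv_two_pow_subset_Ioc (k : ℕ) :
    Ioc ((2:ℝ) ^ (k + 1))⁻¹ ((2:ℝ) ^ k)⁻¹ ⊆ Ioc 0 1 :=
  Ioc_subset_Ioc (by positivity) (inv_le_one_of_one_le₀ (one_le_pow₀ one_le_two))

theorem two_pow_succ_mul_sub_one_mem_Ioc_iff (k : ℕ) (x : ℝ) :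
    2 ^ (k + 1) * x - 1 ∈ Ioc (0:ℝ) 1 ↔ x ∈ Ioc ((2:ℝ) ^ (k + 1))⁻¹ ((2:ℝ) ^ k)⁻¹ := by
  rw [mem_Ioc, mem_Ioc, sub_pos, sub_le_iff_le_add, inv_lt_iff_one_lt_mul₀' (by positivity),
    ← mul_one ((2:ℝ) ^ k)⁻¹, le_inv_mul_iff₀ (by positivity), pow_succ', mul_assoc]
  constructor <;> rintro ⟨h1, h2⟩ <;> exact ⟨h1, by linarith⟩

theorem p2dT_eq_of_p2dD1_eq {x : ℝ} {k : ℕ} (h : p2dD1 x = k + 1) :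
    p2dT x = 2 ^ (k + 1) * x - 1 := by
  rw [p2dT, h]

theorem p2dT_eq_of_mem_Ioc {x : ℝ} {k : ℕ} (hx : x ∈ Ioc ((2:ℝ) ^ (k + 1))⁻¹ ((2:ℝ) ^ k)⁻¹) :
    p2dT x = 2 ^ (k + 1) * x - 1 :=
  p2dT_eq_of_p2dD1_eq ((p2dD1_eq_succ_iff (Ioc_inv_two_pow_subset_Ioc k hx) k).2 hx)

theorem p2dT_mem_Ioc {x : ℝ} (hx : x ∈ Ioc (0:ℝ) 1) : p2dT x ∈ Ioc (0:ℝ) 1 := by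
  obtain ⟨k, hk⟩ := Nat.exists_eq_add_of_le' (one_le_p2dD1 hx)
  rw [p2dT_eq_of_p2dD1_eq hk, two_pow_succ_mul_sub_one_mem_Ioc_iff, ← p2dD1_eq_succ_iff hx, hk]

theorem measurable_p2dD1 : Measurable p2dD1 :=
  measurable_from_top.comp
    ((measurable_log.div_const (log 2)).neg.floor.add_const 1 : Measurable fun x ↦ ⌊-logb 2 x⌋ + 1)

theorem measurable_p2dT : Measurable p2dT :=
  ((measurable_from_top.comp measurable_p2dD1).mul measurable_id).sub_const 1

theorem measurable_p2dDigit (n : ℕ) : Measurable (p2dDigit n) :=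
  measurable_p2dD1.comp (measurable_p2dT.iterate _)

theorem p2dDigit_one (x : ℝ) : p2dDigit 1 x = p2dD1 x := rfl

theorem p2dDigit_succ_succ (n : ℕ) (x : ℝ) : p2dDigit (n + 2) x = p2dDigit (n + 1) (p2dT x) := rfl

theorem measurableSet_setOf_forall_le_p2dDigit (N : ℕ) (g : ℕ → ℕ) :
    MeasurableSet {x : ℝ | x ∈ Ioc (0:ℝ) 1 ∧ ∀ j < N, g j ≤ p2dDigit (j + 1) x} :=
  measurableSet_setOfPred.2 <| measurableSet_Ioc.mem.and <| .forall fun j ↦ .forall fun _ ↦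
    measurableSet_setOfPred.1 (measurable_p2dDigit (j + 1) measurableSet_Ici)

theorem measurableSet_setOf_le_p2dDigit (n k : ℕ) : MeasurableSet {x : ℝ | k ≤ p2dDigit n x} :=
  measurable_p2dDigit n measurableSet_Ici

theorem Ioc_inter_preimage_p2dT {S : Set ℝ} (hS : S ⊆ Ioc 0 1) (k : ℕ) :
    Ioc ((2:ℝ) ^ (k + 1))⁻¹ ((2:ℝ) ^ k)⁻¹ ∩ p2dT ⁻¹' S = (fun x ↦ 2 ^ (k + 1) * x - 1) ⁻¹' S := by
  ext x
  constructor
  · rintro ⟨hx, hTx⟩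
    rwa [mem_preimage, ← p2dT_eq_of_mem_Ioc hx]
  · intro hx
    have hxI := (two_pow_succ_mul_sub_one_mem_Ioc_iff k x).1 (hS hx)
    exact ⟨hxI, by rwa [mem_preimage, p2dT_eq_of_mem_Ioc hxI]⟩

theorem volume_preimage_two_pow_succ_mul_sub_one (k : ℕ) (S : Set ℝ) :
    volume ((fun x : ℝ ↦ 2 ^ (k + 1) * x - 1) ⁻¹' S) = ((2:ℝ≥0∞) ^ (k + 1))⁻¹ * volume S := by
  rw [show (fun x : ℝ ↦ 2 ^ (k + 1) * x - 1) ⁻¹' S = (2 ^ (k + 1) * ·) ⁻¹' ((· + -1) ⁻¹' S)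
      from rfl,
    Real.volume_preimage_mul_left (by positivity), measure_preimage_add_right]
  simp [abs_of_pos, ENNReal.ofReal_inv_of_pos]

theorem volume_setOf_le_p2dD1_and_p2dT_mem (m : ℕ) {S : Set ℝ} (hS : S ⊆ Ioc 0 1)
    (hSm : MeasurableSet S) :
    volume {x : ℝ | x ∈ Ioc (0:ℝ) 1 ∧ m + 1 ≤ p2dD1 x ∧ p2dT x ∈ S}
      = ((2:ℝ≥0∞) ^ m)⁻¹ * volume S := by
  set I : ℕ → Set ℝ := fun k ↦ Ioc ((2:ℝ) ^ (m + k + 1))⁻¹ ((2:ℝ) ^ (m + k))⁻¹ ∩ p2dT ⁻¹' S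
  have hunion : {x : ℝ | x ∈ Ioc (0:ℝ) 1 ∧ m + 1 ≤ p2dD1 x ∧ p2dT x ∈ S} = ⋃ k, I k := by
    ext x
    simp only [I, mem_ofPred_eq, mem_iUnion, mem_inter_iff, mem_preimage]
    constructor
    · rintro ⟨hx, hm, hTx⟩
      obtain ⟨k, hk⟩ := Nat.exists_eq_add_of_le hm
      exact ⟨k, (p2dD1_eq_succ_iff hx _).1 (by omega), hTx⟩
    · rintro ⟨k, hxI, hTx⟩
      have hx := Ioc_inv_two_pow_subset_Ioc _ hxI
      exact ⟨hx, by rw [(p2dD1_eq_succ_iff hx _).2 hxI]; omega, hTx⟩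
  have hdisj : Pairwise (Function.onFun Disjoint I) := fun i j hij ↦
      disjoint_left.2 fun x hi hj ↦ by
    have hx := Ioc_inv_two_pow_subset_Ioc _ hi.1
    have := ((p2dD1_eq_succ_iff hx _).2 hi.1).symm.trans ((p2dD1_eq_succ_iff hx _).2 hj.1)
    omega
  have hI (k : ℕ) : volume (I k) = (2⁻¹ : ℝ≥0∞) ^ m * 2⁻¹ ^ (k + 1) * volume S := by
    simp only [I]
    rw [Ioc_inter_preimage_p2dT hS, volume_preimage_two_pow_succ_mul_sub_one, ENNReal.inv_pow,
      ← pow_add, add_assoc]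
  rw [hunion, measure_iUnion hdisj fun k ↦ measurableSet_Ioc.inter (measurable_p2dT hSm)]
  simp_rw [hI, ENNReal.tsum_mul_right, ENNReal.tsum_mul_left, ENNReal.tsum_geometric_add_one,
    ENNReal.one_sub_inv_two, inv_inv, ENNReal.inv_mul_cancel two_ne_zero ENNReal.ofNat_ne_top,
    mul_one, ENNReal.inv_pow]

/-- Truncated subtraction makes the factor `1` when `g j = 0`, as it should: digits are `≥ 1`. -/
theorem volume_setOf_forall_le_p2dDigit (N : ℕ) (g : ℕ → ℕ) :
    volume {x : ℝ | x ∈ Ioc (0:ℝ) 1 ∧ ∀ j < N, g j ≤ p2dDigit (j + 1) x}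
      = ∏ j ∈ Finset.range N, ((2:ℝ≥0∞) ^ (g j - 1))⁻¹ := by
  induction N generalizing g with
  | zero =>
    simp only [not_lt_zero, IsEmpty.forall_iff, implies_true, and_true, ofPred_mem_eq,
      Finset.range_zero, Finset.prod_empty, Real.volume_Ioc, sub_zero, ENNReal.ofReal_one]
  | succ N ih =>
    set S := {y : ℝ | y ∈ Ioc (0:ℝ) 1 ∧ ∀ j < N, g (j + 1) ≤ p2dDigit (j + 1) y}
    have hsplit : {x : ℝ | x ∈ Ioc (0:ℝ) 1 ∧ ∀ j < N + 1, g j ≤ p2dDigit (j + 1) x}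
        = {x : ℝ | x ∈ Ioc (0:ℝ) 1 ∧ g 0 - 1 + 1 ≤ p2dD1 x ∧ p2dT x ∈ S} := by
      ext x
      simp only [S, mem_ofPred_eq, Nat.forall_lt_succ_left, zero_add, p2dDigit_one,
        ← p2dDigit_succ_succ]
      constructor
      · rintro ⟨hx, h0, hrest⟩
        exact ⟨hx, by have := one_le_p2dD1 hx; omega, p2dT_mem_Ioc hx, hrest⟩
      · rintro ⟨hx, h0, -, hrest⟩
        exact ⟨hx, by have := one_le_p2dD1 hx; omega, hrest⟩
    rw [hsplit, volume_setOf_le_p2dD1_and_p2dT_mem _ (fun y hy ↦ hy.1)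
      (measurableSet_setOf_forall_le_p2dDigit N _), ih, Finset.prod_range_succ', mul_comm]

theorem restrict_Ioc_biInter_le_p2dDigit (F : Finset ℕ) (m : ℕ → ℕ) :
    volume.restrict (Ioc (0:ℝ) 1) (⋂ i ∈ F, {x | m i ≤ p2dDigit (i + 1) x})
      = ∏ i ∈ F, ((2:ℝ≥0∞) ^ (m i - 1))⁻¹ := by
  classical
  obtain ⟨N, hFN⟩ := F.exists_nat_subset_range
  set g : ℕ → ℕ := fun j ↦ if j ∈ F then m j else 0
  have hcyl : (⋂ i ∈ F, {x | m i ≤ p2dDigit (i + 1) x}) ∩ Ioc 0 1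
      = {x : ℝ | x ∈ Ioc (0:ℝ) 1 ∧ ∀ j < N, g j ≤ p2dDigit (j + 1) x} := by
    ext x
    simp only [g, mem_inter_iff, mem_iInter, mem_ofPred_eq]
    constructor
    · rintro ⟨hF, hx⟩
      refine ⟨hx, fun j _ ↦ ?_⟩
      split_ifs with hj
      exacts [hF j hj, Nat.zero_le _]
    · rintro ⟨hx, hN⟩
      refine ⟨fun i hi ↦ ?_, hx⟩
      simpa [hi] using hN i (Finset.mem_range.1 (hFN hi))
  rw [Measure.restrict_apply' measurableSet_Ioc, hcyl, volume_setOf_forall_le_p2dDigit,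
    ← Finset.prod_subset hFN fun j _ hj ↦ by simp [g, hj]]
  exact Finset.prod_congr rfl fun j hj ↦ by simp [g, hj]

theorem restrict_Ioc_setOf_le_p2dDigit (j m : ℕ) :
    volume.restrict (Ioc (0:ℝ) 1) {x | m ≤ p2dDigit (j + 1) x} = ((2:ℝ≥0∞) ^ (m - 1))⁻¹ := by
  simpa using restrict_Ioc_biInter_le_p2dDigit {j} fun _ ↦ m

theorem iIndepSet_setOf_le_p2dDigit (m : ℕ → ℕ) :
    ProbabilityTheory.iIndepSet (fun j ↦ {x : ℝ | m j ≤ p2dDigit (j + 1) x})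
      (volume.restrict (Ioc 0 1)) := by
  rw [ProbabilityTheory.iIndepSet_iff_meas_biInter fun j ↦ measurableSet_setOf_le_p2dDigit _ _]
  intro F
  rw [restrict_Ioc_biInter_le_p2dDigit]
  exact Finset.prod_congr rfl fun j _ ↦ (restrict_Ioc_setOf_le_p2dDigit j (m j)).symm

theorem natCast_ceil_sub_one_le {y : ℝ} (hy : 0 ≤ y) : ((⌈y⌉₊ - 1 : ℕ) : ℝ) ≤ y :=
  calc ((⌈y⌉₊ - 1 : ℕ) : ℝ) ≤ ⌊y⌋₊ := Nat.cast_le.2 (by have := Nat.ceil_le_floor_add_one y; omega)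
    _ ≤ y := Nat.floor_le hy

theorem tsum_inv_two_pow_ceil_sub_one_eq_top {φ : ℕ → ℝ} (hφ : ∀ n, 0 ≤ φ n)
    (hsum : ¬ Summable fun n ↦ (2:ℝ) ^ (-φ n)) :
    ∑' n, ((2:ℝ≥0∞) ^ (⌈φ n⌉₊ - 1))⁻¹ = ∞ := by
  by_contra h
  refine hsum (.of_nonneg_of_le (fun n ↦ by positivity) (fun n ↦ ?_) (ENNReal.summable_toReal h))
  rw [ENNReal.toReal_inv, ENNReal.toReal_pow, ENNReal.toReal_ofNat, ← rpow_natCast,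
    ← rpow_neg zero_le_two]
  exact rpow_le_rpow_of_exponent_le one_le_two (neg_le_neg (natCast_ceil_sub_one_le (hφ n)))

/-- divergence part of the Borel–Bernstein theorem. -/
theorem p2d_BorelBernstein_div (φ : ℕ → ℝ) (hφ : ∀ n, 0 < φ n)
    (hsum : ¬ Summable (fun n => (2:ℝ) ^ (-φ n))) :
    volume {x : ℝ | x ∈ Set.Ioc (0:ℝ) 1 ∧
        ∃ᶠ n in atTop, (φ n ≤ (p2dDigit n x : ℝ))} = 1 := by
  set E : ℕ → Set ℝ := fun j ↦ {x | ⌈φ (j + 1)⌉₊ ≤ p2dDigit (j + 1) x}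
  have hindep := iIndepSet_setOf_le_p2dDigit fun j ↦ ⌈φ (j + 1)⌉₊
  have hdiv : ∑' j, volume.restrict (Ioc 0 1) (E j) = ∞ := by
    simp only [E, restrict_Ioc_setOf_le_p2dDigit]
    exact tsum_inv_two_pow_ceil_sub_one_eq_top (fun n ↦ (hφ (n + 1)).le)
      (mt (summable_nat_add_iff (f := fun n ↦ (2:ℝ) ^ (-φ n)) 1).1 hsum)
  have hlimsup := ProbabilityTheory.measure_limsup_eq_one
    (fun j ↦ measurableSet_setOf_le_p2dDigit _ _) hindep hdiv
  have hsub : limsup E atTop ⊆ {x | ∃ᶠ n in atTop, φ n ≤ p2dDigit n x} := fun x hx ↦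
    (tendsto_add_atTop_nat 1).frequently
      ((mem_limsup_iff_frequently_mem.1 hx).mono fun _ ↦ Nat.ceil_le.1)
  have := hindep.isProbabilityMeasure
  change volume (Ioc 0 1 ∩ {x | ∃ᶠ n in atTop, φ n ≤ p2dDigit n x}) = 1
  rw [inter_comm, ← Measure.restrict_apply' measurableSet_Ioc]
  exact le_antisymm prob_le_one (hlimsup ▸ measure_mono hsub)
end

section
/- Let φ:ℕ→ℝ⁺ with liminf_{n→∞} φ(n)/n = ∞. Then the set F(φ)={x∈(0,1]: d_n(x)≥φ(n) for infinitely many n} has Hausdorff dimension 0. -/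
open MeasureTheory Filter Set Real

open scoped ENNReal Topology

lemma two_pow_p2dD1_mul_mem_Ioc {x : ℝ} (hx : x ∈ Ioc (0 : ℝ) 1) :
    2 ^ p2dD1 x * x ∈ Ioc (1 : ℝ) 2 := by
  have hk : 0 ≤ Int.log 2 x⁻¹ := by
    rw [Int.log_of_one_le_right _ ((one_le_inv₀ hx.1).2 hx.2)]; exact Int.natCast_nonneg _
  set k := Int.log 2 x⁻¹
  have hpow : (2 : ℝ) ^ p2dD1 x = 2 ^ (k + 1) := by
    rw [p2dD1, ← Real.logb_inv, ← Nat.cast_ofNat, Real.floor_logb_natCast (inv_nonneg.2 hx.1.le),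
      Nat.cast_ofNat, ← zpow_natCast, Int.toNat_of_nonneg (by omega)]
  have hlo : (2 : ℝ) ^ k ≤ x⁻¹ := by
    exact_mod_cast Int.zpow_log_le_self (by norm_num) (inv_pos.2 hx.1)
  have hhi : x⁻¹ < 2 ^ (k + 1) := by exact_mod_cast Int.lt_zpow_succ_log_self (by norm_num) x⁻¹
  rw [hpow]
  constructor
  · exact (inv_lt_iff_one_lt_mul₀ hx.1).1 hhi
  · rw [zpow_add_one₀ two_ne_zero]
    have := mul_le_mul_of_nonneg_right hlo hx.1.le
    rw [inv_mul_cancel₀ hx.1.ne'] at this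
    linarith

lemma mapsTo_p2dT : MapsTo p2dT (Ioc 0 1) (Ioc 0 1) := fun x hx => by
  have := two_pow_p2dD1_mul_mem_Ioc hx
  constructor <;> simp only [p2dT] <;> linarith [this.1, this.2]

lemma two_pow_mul_le_two_of_le_p2dD1 {x : ℝ} (hx : x ∈ Ioc (0 : ℝ) 1) {K : ℕ}
    (hK : K ≤ p2dD1 x) : 2 ^ K * x ≤ 2 :=
  calc 2 ^ K * x ≤ 2 ^ p2dD1 x * x :=
      mul_le_mul_of_nonneg_right (pow_le_pow_right₀ one_le_two hK) hx.1.le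
    _ ≤ 2 := (two_pow_p2dD1_mul_mem_Ioc hx).2

lemma p2dT_sub_p2dT {x y : ℝ} (h : p2dD1 x = p2dD1 y) :
    p2dT x - p2dT y = 2 ^ p2dD1 x * (x - y) := by
  simp only [p2dT, h]; ring

lemma iterate_p2dT_sub {m : ℕ} {x y : ℝ}
    (h : ∀ j : Fin m, p2dD1 (p2dT^[j] x) = p2dD1 (p2dT^[j] y)) :
    p2dT^[m] x - p2dT^[m] y = 2 ^ (∑ j : Fin m, p2dD1 (p2dT^[j] x)) * (x - y) := by
  induction m generalizing x y with
  | zero => simp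
  | succ m ih =>
    have h0 : p2dD1 x = p2dD1 y := h 0
    rw [Function.iterate_succ_apply, Function.iterate_succ_apply,
      ih fun j => by simpa only [Fin.val_succ, Function.iterate_succ_apply] using h j.succ,
      p2dT_sub_p2dT h0, Fin.sum_univ_succ, pow_add]
    simp only [Fin.val_zero, Function.iterate_zero_apply, Fin.val_succ, Function.iterate_succ_apply]
    ring

-- `p2dD1 (p2dT^[j] x)` is the digit `d_(j+1) x`.
def p2dCylinder {m : ℕ} (w : Fin m → ℕ) (K : ℕ) : Set ℝ :=
  {x | x ∈ Ioc 0 1 ∧ (∀ j : Fin m, p2dD1 (p2dT^[j] x) = w j) ∧ K ≤ p2dD1 (p2dT^[m] x)}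

lemma abs_sub_le_of_mem_p2dCylinder {m : ℕ} {w : Fin m → ℕ} {K : ℕ} {x y : ℝ}
    (hx : x ∈ p2dCylinder w K) (hy : y ∈ p2dCylinder w K) :
    |x - y| ≤ 2 * 2⁻¹ ^ (∑ j, w j + K) := by
  have hxm := (mapsTo_p2dT.iterate m) hx.1
  have hym := (mapsTo_p2dT.iterate m) hy.1
  have hu := two_pow_mul_le_two_of_le_p2dD1 hxm hx.2.2
  have hv := two_pow_mul_le_two_of_le_p2dD1 hym hy.2.2
  have hdiff := iterate_p2dT_sub fun j => (hx.2.1 j).trans (hy.2.1 j).symm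
  simp only [hx.2.1] at hdiff
  have hscale : 2 ^ (∑ j, w j) * |x - y| = |p2dT^[m] x - p2dT^[m] y| := by
    rw [hdiff, abs_mul, abs_of_pos (by positivity : (0 : ℝ) < 2 ^ ∑ j, w j)]
  have key : 2 ^ (∑ j, w j + K) * |x - y| ≤ 2 := by
    calc 2 ^ (∑ j, w j + K) * |x - y| = |2 ^ K * p2dT^[m] x - 2 ^ K * p2dT^[m] y| := by
          rw [pow_add, mul_comm (2 ^ _ : ℝ), mul_assoc, hscale, ← mul_sub, abs_mul,
            abs_of_pos (by positivity : (0 : ℝ) < 2 ^ K)]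
      _ ≤ 2 := abs_sub_le_of_nonneg_of_le (by have := hxm.1; positivity) hu
          (by have := hym.1; positivity) hv
  rw [inv_pow, ← div_eq_mul_inv, le_div_iff₀ (by positivity), mul_comm]
  exact key

lemma ediam_p2dCylinder_le {m : ℕ} (w : Fin m → ℕ) (K : ℕ) :
    Metric.ediam (p2dCylinder w K) ≤ 2 * 2⁻¹ ^ (∑ j, w j + K) := by
  refine Metric.ediam_le fun x hx y hy => ?_
  have hofReal : ENNReal.ofReal (2 * 2⁻¹ ^ (∑ j, w j + K)) = 2 * 2⁻¹ ^ (∑ j, w j + K) := by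
    rw [ENNReal.ofReal_mul zero_le_two, ENNReal.ofReal_pow (by norm_num),
      ENNReal.ofReal_inv_of_pos two_pos, ENNReal.ofReal_ofNat]
  rw [edist_dist, Real.dist_eq, ← hofReal]
  exact ENNReal.ofReal_le_ofReal (abs_sub_le_of_mem_p2dCylinder hx hy)

theorem ENNReal.tsum_fin_pi_prod {α : Type*} (f : α → ℝ≥0∞) (m : ℕ) :
    ∑' w : Fin m → α, ∏ j, f (w j) = (∑' a, f a) ^ m := by
  induction m with
  | zero => simp
  | succ m ih =>
    rw [← (Fin.consEquiv fun _ => α).tsum_eq, ENNReal.tsum_prod', pow_succ',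
      ← ENNReal.tsum_mul_right]
    refine tsum_congr fun a => ?_
    simp [Fin.consEquiv, Fin.prod_univ_succ, ENNReal.tsum_mul_left, ih]

lemma tsum_ediam_p2dCylinder_rpow_le {s : ℝ} (hs : 0 ≤ s) (m K : ℕ) :
    ∑' w : Fin m → ℕ, Metric.ediam (p2dCylinder w K) ^ s
      ≤ 2 ^ s * (2⁻¹ ^ s) ^ K * ((1 - 2⁻¹ ^ s)⁻¹) ^ m := by
  calc ∑' w : Fin m → ℕ, Metric.ediam (p2dCylinder w K) ^ s
      ≤ ∑' w : Fin m → ℕ, 2 ^ s * (2⁻¹ ^ s) ^ K * ∏ j, (2⁻¹ ^ s) ^ w j := by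
        refine ENNReal.tsum_le_tsum fun w => ?_
        calc Metric.ediam (p2dCylinder w K) ^ s ≤ (2 * 2⁻¹ ^ (∑ j, w j + K)) ^ s :=
              ENNReal.rpow_le_rpow (ediam_p2dCylinder_le w K) hs
          _ = _ := by
              rw [ENNReal.mul_rpow_of_nonneg _ _ hs, ← ENNReal.rpow_natCast_mul,
                mul_comm (_ : ℝ) s, ENNReal.rpow_mul_natCast, Finset.prod_pow_eq_pow_sum, pow_add]
              ring
    _ = 2 ^ s * (2⁻¹ ^ s) ^ K * ((1 - 2⁻¹ ^ s)⁻¹) ^ m := by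
        rw [ENNReal.tsum_mul_left, ENNReal.tsum_fin_pi_prod, ENNReal.tsum_geometric]

-- Words containing the impossible digit `0` index empty cylinders; they only enlarge the sums.
def p2dCover (M N : ℕ) (i : Σ k, Fin (k + N) → ℕ) : Set ℝ :=
  p2dCylinder i.2 (M * (i.1 + N + 1))

lemma subset_iUnion_p2dCover (M N : ℕ) :
    {x : ℝ | x ∈ Ioc 0 1 ∧ ∃ᶠ n in atTop, M * n ≤ p2dDigit n x} ⊆ ⋃ i, p2dCover M N i := by
  rintro x ⟨hx, hfreq⟩
  obtain ⟨n, hn, hdigit⟩ := frequently_atTop.1 hfreq (N + 1)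
  obtain ⟨k, rfl⟩ : ∃ k, n = k + N + 1 := ⟨n - (N + 1), by omega⟩
  exact mem_iUnion.2 ⟨⟨k, fun j => p2dD1 (p2dT^[j] x)⟩, hx, fun _ => rfl, hdigit⟩

lemma ediam_p2dCover_le {M : ℕ} (hM : 1 ≤ M) (N : ℕ) (i : Σ k, Fin (k + N) → ℕ) :
    Metric.ediam (p2dCover M N i) ≤ 2 * 2⁻¹ ^ N := by
  refine (ediam_p2dCylinder_le _ _).trans ?_
  gcongr 2 * ?_
  have := Nat.le_mul_of_pos_left (i.1 + N + 1) hM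
  exact pow_le_pow_right_of_le_one' (by norm_num) (by omega)

lemma tsum_ediam_p2dCover_rpow_le {s : ℝ} (hs : 0 ≤ s) (M N : ℕ) :
    ∑' i, Metric.ediam (p2dCover M N i) ^ s
      ≤ ∑' k, 2 ^ s * ((2⁻¹ ^ s) ^ M * (1 - 2⁻¹ ^ s)⁻¹) ^ (k + N) := by
  rw [ENNReal.tsum_sigma' (fun i => Metric.ediam (p2dCover M N i) ^ s)]
  refine ENNReal.tsum_le_tsum fun k => ?_
  have hq : (2⁻¹ : ℝ≥0∞) ^ s ≤ 1 := ENNReal.rpow_le_one (by norm_num) hs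
  calc ∑' w, Metric.ediam (p2dCylinder w (M * (k + N + 1))) ^ s
      ≤ 2 ^ s * (2⁻¹ ^ s) ^ (M * (k + N + 1)) * (1 - 2⁻¹ ^ s)⁻¹ ^ (k + N) :=
        tsum_ediam_p2dCylinder_rpow_le hs _ _
    _ ≤ 2 ^ s * (2⁻¹ ^ s) ^ (M * (k + N)) * (1 - 2⁻¹ ^ s)⁻¹ ^ (k + N) := by
        gcongr 2 ^ s * ?_ * _
        exact pow_le_pow_right_of_le_one' hq (by nlinarith)
    _ = 2 ^ s * ((2⁻¹ ^ s) ^ M * (1 - 2⁻¹ ^ s)⁻¹) ^ (k + N) := by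
        rw [pow_mul, mul_pow, mul_assoc]

lemma hausdorffMeasure_setOf_frequently_mul_le_p2dDigit_eq_zero {s : ℝ} (hs : 0 ≤ s) {M : ℕ}
    (hM₁ : 1 ≤ M) (hM : (2⁻¹ ^ s) ^ M * (1 - 2⁻¹ ^ s)⁻¹ < (1 : ℝ≥0∞)) :
    μH[s] {x : ℝ | x ∈ Ioc 0 1 ∧ ∃ᶠ n in atTop, M * n ≤ p2dDigit n x} = 0 := by
  set ρ : ℝ≥0∞ := (2⁻¹ ^ s) ^ M * (1 - 2⁻¹ ^ s)⁻¹
  have hr : Tendsto (fun N : ℕ => (2 : ℝ≥0∞) * 2⁻¹ ^ N) atTop (𝓝 0) := by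
    simpa using ENNReal.Tendsto.const_mul
      (ENNReal.tendsto_pow_atTop_nhds_zero_of_lt_one (by norm_num)) (Or.inr ENNReal.ofNat_ne_top)
  have htail : Tendsto (fun N : ℕ => ∑' k, 2 ^ s * ρ ^ (k + N)) atTop (𝓝 0) := by
    refine ENNReal.tendsto_sum_nat_add (fun m => 2 ^ s * ρ ^ m) ?_
    rw [ENNReal.tsum_mul_left, ENNReal.tsum_geometric]
    exact ENNReal.mul_ne_top (by finiteness) (ENNReal.inv_ne_top.2 (tsub_pos_iff_lt.2 hM).ne')
  refine le_antisymm ?_ zero_le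
  calc μH[s] _ ≤ liminf (fun N => ∑' i, Metric.ediam (p2dCover M N i) ^ s) atTop :=
        Measure.hausdorffMeasure_le_liminf_tsum s _ _ hr (p2dCover M)
          (Eventually.of_forall (ediam_p2dCover_le hM₁))
          (Eventually.of_forall (subset_iUnion_p2dCover M))
    _ ≤ liminf (fun N => ∑' k, 2 ^ s * ρ ^ (k + N)) atTop :=
        liminf_le_liminf (Eventually.of_forall fun N => tsum_ediam_p2dCover_rpow_le hs M N)
    _ = 0 := htail.liminf_eq

lemma ENNReal.exists_pow_mul_inv_one_sub_lt_one {q : ℝ≥0∞} (hq : q < 1) :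
    ∃ M ≥ 1, q ^ M * (1 - q)⁻¹ < 1 := by
  have hlim : Tendsto (fun M : ℕ => q ^ M * (1 - q)⁻¹) atTop (𝓝 0) := by
    simpa using ENNReal.Tendsto.mul_const (ENNReal.tendsto_pow_atTop_nhds_zero_of_lt_one hq)
      (Or.inr (ENNReal.inv_ne_top.2 (tsub_pos_iff_lt.2 hq).ne'))
  obtain ⟨M, hM, hM₁⟩ :=
    ((hlim.eventually_lt_const zero_lt_one).and (eventually_ge_atTop 1)).exists
  exact ⟨M, hM₁, hM⟩

lemma eventually_mul_le_of_tendsto_div_atTop {φ : ℕ → ℝ}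
    (h : Tendsto (fun n : ℕ => φ n / n) atTop atTop) (c : ℝ) :
    ∀ᶠ n : ℕ in atTop, c * n ≤ φ n := by
  filter_upwards [h.eventually_ge_atTop c, eventually_gt_atTop 0] with n hn hpos
  exact (le_div_iff₀ (by exact_mod_cast hpos)).1 hn

theorem p2d_dimH_F_phi_zero_general (φ : ℕ → ℝ)
    (h : Tendsto (fun n : ℕ => φ n / n) atTop atTop) :
    dimH {x : ℝ | x ∈ Set.Ioc (0:ℝ) 1 ∧
        ∃ᶠ n in atTop, (φ n ≤ (p2dDigit n x : ℝ))} = 0 := by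
  refine le_antisymm (dimH_le fun d hd => ?_) zero_le
  by_contra! hd0
  have hs : 0 < (d : ℝ) := by exact_mod_cast hd0
  obtain ⟨M, hM₁, hM⟩ := ENNReal.exists_pow_mul_inv_one_sub_lt_one
    (ENNReal.rpow_lt_one (by norm_num : (2⁻¹ : ℝ≥0∞) < 1) hs)
  have hsub : {x : ℝ | x ∈ Set.Ioc (0:ℝ) 1 ∧ ∃ᶠ n in atTop, (φ n ≤ (p2dDigit n x : ℝ))}
      ⊆ {x : ℝ | x ∈ Ioc 0 1 ∧ ∃ᶠ n in atTop, M * n ≤ p2dDigit n x} := fun x hx =>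
    ⟨hx.1, hx.2.mp ((eventually_mul_le_of_tendsto_div_atTop h M).mono fun n hn hφ => by
      exact_mod_cast hn.trans hφ)⟩
  rw [measure_mono_null hsub
    (hausdorffMeasure_setOf_frequently_mul_le_p2dDigit_eq_zero hs.le hM₁ hM)] at hd
  exact ENNReal.zero_ne_top hd

/-- if `φ(n)/n → ∞` then `F(φ)` has Hausdorff dimension `0`. -/
theorem p2d_dimH_F_phi_zero (φ : ℕ → ℝ) (hφ : ∀ n, 0 < φ n)
    (h : Tendsto (fun n : ℕ => φ n / n) atTop atTop) :
    dimH {x : ℝ | x ∈ Set.Ioc (0:ℝ) 1 ∧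
        ∃ᶠ n in atTop, (φ n ≤ (p2dDigit n x : ℝ))} = 0 :=
  p2d_dimH_F_phi_zero_general φ h
end
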